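/- arXiv:1912.03288 — 2 statements merged into one kernel-verified Lean document; each statement's English description precedes it below -/
import Mathlib

section
/- For any finite connected, acyclic and N-free poset P there exists an element p' ∈ P such that every other element of P is comparable to p'. -/
/-- `U` induces a disjoint union of chains such that any two elements belonging to different
chains are incomparable; equivalently, comparability restricted to `U` is transitive
(so the comparability graph induced on `U` is a vertex-disjoint union of cliques). -/
def IsChainUnion {α : Type*} [PartialOrder α] (U : Finset α) : Prop :=
  ∀ x ∈ U, ∀ y ∈ U, ∀ z ∈ U,
    (x ≤ y ∨ y ≤ x) → (y ≤ z ∨ z ≤ y) → (x ≤ z ∨ z ≤ x)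

/-- `ao α`: the maximum cardinality of a subset of the finite poset `α` that is a
disjoint union of chains with elements of different chains incomparable. -/
noncomputable def ao (α : Type*) [Fintype α] [PartialOrder α] : ℕ :=
  sSup {m | ∃ U : Finset α, IsChainUnion U ∧ U.card = m}

/-- The height of a finite poset: the maximum size of a chain. -/
noncomputable def heightP (α : Type*) [Fintype α] [PartialOrder α] : ℕ :=
  sSup {m | ∃ C : Finset α, IsChain (· ≤ ·) (↑C : Set α) ∧ C.card = m}

/-- The width of a finite poset: the maximum size of an antichain. -/
noncomputable def widthP (α : Type*) [Fintype α] [PartialOrder α] : ℕ :=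
  sSup {m | ∃ A : Finset α, IsAntichain (· ≤ ·) (↑A : Set α) ∧ A.card = m}

/-- The cover graph of a poset: `x` and `y` are adjacent iff one covers the other. -/
def coverGraph (α : Type*) [PartialOrder α] : SimpleGraph α where
  Adj x y := x ⋖ y ∨ y ⋖ x
  symm := ⟨fun x y h => h.symm⟩
  loopless := ⟨fun x h => by rcases h with h | h <;> exact absurd h.lt (lt_irrefl x)⟩

/-- A poset is acyclic if its cover graph has no cycles. -/
def AcyclicPoset (α : Type*) [PartialOrder α] : Prop := (coverGraph α).IsAcyclic

/-- A poset is connected if its cover graph is connected. -/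
def ConnectedPoset (α : Type*) [PartialOrder α] : Prop := (coverGraph α).Connected

/-- A poset is `N`-free if there are no `p1, p2, p3, p4` with `p1 > p3`, `p1 > p4`, `p2 > p4`,
`p1 ∦ p2`, `p2 ∦ p3`, `p3 ∦ p4`. -/
def NFree (α : Type*) [PartialOrder α] : Prop :=
  ¬ ∃ p1 p2 p3 p4 : α, p3 < p1 ∧ p4 < p1 ∧ p4 < p2 ∧
      ¬(p1 ≤ p2 ∨ p2 ≤ p1) ∧ ¬(p2 ≤ p3 ∨ p3 ≤ p2) ∧ ¬(p3 ≤ p4 ∨ p4 ≤ p3)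

/-- A poset is `V`-free if there are no `p1 < p2`, `p1 < p3` with `p2` incomparable to `p3`. -/
def VFree (α : Type*) [PartialOrder α] : Prop :=
  ¬ ∃ p1 p2 p3 : α, p1 < p2 ∧ p1 < p3 ∧ ¬(p2 ≤ p3 ∨ p3 ≤ p2)

/-- `ao` of the family `T_n` of all acyclic posets on `n` elements:
the minimum of `ao P` over acyclic posets `P` of size `n`. -/
noncomputable def aoT (n : ℕ) : ℕ :=
  sInf {m | ∃ P : PartialOrder (Fin n),
    @AcyclicPoset (Fin n) P ∧ @ao (Fin n) (Fin.fintype n) P = m}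

/-- `Λ(a, h)`: the maximum cardinality of a `V`-free poset `P` with `ao P = a` and
height at most `h`. -/
noncomputable def Lam (a h : ℕ) : ℕ :=
  sSup {n | ∃ P : PartialOrder (Fin n), @VFree (Fin n) P ∧
    @ao (Fin n) (Fin.fintype n) P = a ∧ @heightP (Fin n) (Fin.fintype n) P ≤ h}

/-- `Λ(a) = Λ(a, a)`. -/
noncomputable def Lambda (a : ℕ) : ℕ := Lam a a

/-- `X(a)`: the maximum cardinality of an acyclic and `N`-free poset `P` with `ao P = a`. -/
noncomputable def Xmax (a : ℕ) : ℕ :=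
  sSup {n | ∃ P : PartialOrder (Fin n), @AcyclicPoset (Fin n) P ∧
    @NFree (Fin n) P ∧ @ao (Fin n) (Fin.fintype n) P = a}

/-!
The cover graph is a finite tree, so it has a leaf `ℓ`; up to order duality its unique neighbour
`v` lies below `ℓ`. Then `ℓ` is maximal and every element below `ℓ` lies below `v`. Removing `ℓ`
leaves a connected, acyclic, `N`-free poset, which by induction has an element `q` comparable to
all of its elements. If `q` is comparable to `ℓ` it is central; otherwise `v < q`, and `v` is
central, since an element `p < q` incomparable to `v` would make `q, ℓ, p, v` an `N`.
-/

open SimpleGraph OrderDual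

universe u

section
variable {α β : Type*} [PartialOrder α] [PartialOrder β]

def IsCentral (c : α) : Prop := ∀ p : α, p ≤ c ∨ c ≤ p

lemma IsCentral.ofDual {c : αᵒᵈ} (hc : IsCentral c) : IsCentral (ofDual c) :=
  fun p => (hc (toDual p)).symm

lemma coverGraph_orderDual : coverGraph αᵒᵈ = coverGraph α := by
  ext x y
  exact ⟨fun h => h.elim (fun h => Or.inr h.ofDual) (fun h => Or.inl h.ofDual),
    fun h => h.elim (fun h => Or.inr h.toDual) (fun h => Or.inl h.toDual)⟩

lemma ConnectedPoset.orderDual (h : ConnectedPoset α) : ConnectedPoset αᵒᵈ := by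
  rwa [ConnectedPoset, coverGraph_orderDual]

lemma AcyclicPoset.orderDual (h : AcyclicPoset α) : AcyclicPoset αᵒᵈ := by
  rwa [AcyclicPoset, coverGraph_orderDual]

lemma NFree.orderDual (h : NFree α) : NFree αᵒᵈ :=
  fun ⟨p1, p2, p3, p4, h31, h41, h42, h12, h23, h34⟩ =>
    h ⟨ofDual p4, ofDual p3, ofDual p2, ofDual p1, h42, h41, h31, h34, h23, h12⟩

lemma NFree.comap (f : β ↪o α) (h : NFree α) : NFree β :=
  fun ⟨p1, p2, p3, p4, h31, h41, h42, h12, h23, h34⟩ =>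
    h ⟨f p1, f p2, f p3, f p4, f.lt_iff_lt.2 h31, f.lt_iff_lt.2 h41, f.lt_iff_lt.2 h42,
      by simpa only [f.le_iff_le] using h12, by simpa only [f.le_iff_le] using h23,
      by simpa only [f.le_iff_le] using h34⟩

lemma Set.OrdConnected.coverGraph_eq_induce {s : Set α} (hs : s.OrdConnected) :
    coverGraph s = (coverGraph α).induce s := by
  ext x y
  have hcov (a b : s) : (a : α) ⋖ b ↔ a ⋖ b :=
    Set.OrdConnected.apply_covBy_apply_iff (OrderEmbedding.subtype (· ∈ s))
      (by rwa [OrderEmbedding.coe_subtype, Subtype.range_coe])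
  simp only [coverGraph, induce_adj, hcov]

lemma isMax_of_covBy_of_forall_adj_eq [Finite α] {ℓ v : α} (hvℓ : v ⋖ ℓ)
    (hleaf : ∀ w, (coverGraph α).Adj ℓ w → w = v) : IsMax ℓ := by
  refine isMax_iff_forall_not_lt.2 fun x hℓx => ?_
  obtain ⟨w, hℓw, -⟩ := exists_covBy_le_of_lt hℓx
  exact (hvℓ.lt.trans (hleaf w (Or.inl hℓw) ▸ hℓw.lt)).false

lemma le_of_lt_of_forall_adj_eq [Finite α] {ℓ v x : α}
    (hleaf : ∀ w, (coverGraph α).Adj ℓ w → w = v) (hxℓ : x < ℓ) : x ≤ v := by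
  obtain ⟨w, hxw, hwℓ⟩ := exists_le_covBy_of_lt hxℓ
  exact hleaf w (Or.inr hwℓ) ▸ hxw

lemma NFree.exists_isCentral_of_isMax (hN : NFree α) {ℓ v q : α} (hvℓ : v < ℓ) (hℓ : IsMax ℓ)
    (hbelow : ∀ x < ℓ, x ≤ v) (hq : ∀ p ≠ ℓ, p ≤ q ∨ q ≤ p) : ∃ c : α, IsCentral c := by
  by_cases hℓq : ℓ ≤ q ∨ q ≤ ℓ
  · refine ⟨q, fun p => ?_⟩
    rcases eq_or_ne p ℓ with rfl | hpℓ
    exacts [hℓq, hq p hpℓ]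
  obtain ⟨hℓq, hqℓ⟩ := not_or.1 hℓq
  have hvq : v < q := ((hq v hvℓ.ne).resolve_right fun h => hqℓ (h.trans hvℓ.le)).lt_of_ne
    (by rintro rfl; exact hqℓ hvℓ.le)
  refine ⟨v, fun p => ?_⟩
  rcases eq_or_ne p ℓ with rfl | hpℓ
  · exact Or.inr hvℓ.le
  rcases hq p hpℓ with hpq | hqp
  · by_contra hpv
    obtain ⟨hpv, hvp⟩ := not_or.1 hpv
    have hpℓ' : ¬(ℓ ≤ p ∨ p ≤ ℓ) := by
      rintro (h | h)
      exacts [hpℓ (hℓ.eq_of_ge h), hpv (hbelow p (h.lt_of_ne hpℓ))]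
    exact hN ⟨q, ℓ, p, v, hpq.lt_of_ne (by rintro rfl; exact hvp hvq.le), hvq, hvℓ,
      fun h => h.elim hqℓ hℓq, hpℓ', fun h => h.elim hpv hvp⟩
  · exact Or.inr (hvq.le.trans hqp)

end

lemma exists_isCentral_of_forall_adj_eq {α : Type u} [Finite α] [PartialOrder α]
    (hconn : ConnectedPoset α) (hacyc : AcyclicPoset α) (hN : NFree α) {ℓ v : α} (hvℓ : v ⋖ ℓ)
    (hleaf : ∀ w, (coverGraph α).Adj ℓ w → w = v)
    (ih : ∀ (β : Type u) [Finite β] [PartialOrder β], Nat.card β < Nat.card α →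
      ConnectedPoset β → AcyclicPoset β → NFree β → ∃ c : β, IsCentral c) :
    ∃ c : α, IsCentral c := by
  have hℓ := isMax_of_covBy_of_forall_adj_eq hvℓ hleaf
  have hs : ({ℓ}ᶜ : Set α).OrdConnected := IsLowerSet.ordConnected <| by
    rintro a b hba ha rfl
    exact ha (hℓ.eq_of_ge hba)
  have : Nonempty ({ℓ}ᶜ : Set α) := ⟨⟨v, hvℓ.lt.ne⟩⟩
  have hconn' : ConnectedPoset ({ℓ}ᶜ : Set α) := by
    rw [ConnectedPoset, hs.coverGraph_eq_induce]
    refine ⟨hconn.preconnected.induce_of_degree_eq_one fun w hw => ?_⟩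
    rw [Set.notMem_compl_iff, Set.mem_singleton_iff] at hw
    exact Set.subsingleton_of_forall_eq v fun w' => hw ▸ hleaf w'
  have hacyc' : AcyclicPoset ({ℓ}ᶜ : Set α) := by
    rw [AcyclicPoset, hs.coverGraph_eq_induce]
    exact hacyc.induce _
  obtain ⟨q, hq⟩ := ih _ (Finite.card_subtype_lt (x := ℓ) (by simp)) hconn' hacyc'
    (hN.comap (OrderEmbedding.subtype _))
  exact hN.exists_isCentral_of_isMax hvℓ.lt hℓ (fun _ => le_of_lt_of_forall_adj_eq hleaf)
    fun p hp => hq ⟨p, hp⟩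

theorem exists_isCentral (α : Type u) [Finite α] [PartialOrder α] (hconn : ConnectedPoset α)
    (hacyc : AcyclicPoset α) (hN : NFree α) : ∃ c : α, IsCentral c := by
  induction h : Nat.card α using Nat.strong_induction_on generalizing α with
  | _ n ih =>
  subst h
  rcases subsingleton_or_nontrivial α with hα | hα
  · obtain ⟨c⟩ := hconn.nonempty
    exact ⟨c, fun p => Or.inl (Subsingleton.elim p c).le⟩
  have ih' (β : Type u) [Finite β] [PartialOrder β] (hβ : Nat.card β < Nat.card α)
      (hconn : ConnectedPoset β) (hacyc : AcyclicPoset β) (hN : NFree β) :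
      ∃ c : β, IsCentral c :=
    ih _ hβ β hconn hacyc hN rfl
  classical
  have := Fintype.ofFinite α
  obtain ⟨ℓ, hℓ⟩ := IsTree.exists_vert_degree_one_of_nontrivial ⟨hconn, hacyc⟩
  obtain ⟨v, hadj, hleaf⟩ := degree_eq_one_iff_existsUnique_adj.1 hℓ
  rcases hadj with hℓv | hvℓ
  · obtain ⟨c, hc⟩ := exists_isCentral_of_forall_adj_eq (α := αᵒᵈ) hconn.orderDual
      hacyc.orderDual hN.orderDual hℓv.toDual (coverGraph_orderDual (α := α) ▸ hleaf) ih'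
    exact ⟨ofDual c, hc.ofDual⟩
  · exact exists_isCentral_of_forall_adj_eq hconn hacyc hN hvℓ hleaf ih'

/-- any finite connected, acyclic and `N`-free poset has an element comparable
to every other element. -/
theorem exists_central_element (α : Type*) [Fintype α] [PartialOrder α]
    (hconn : ConnectedPoset α) (hacyc : AcyclicPoset α) (hN : NFree α) :
    ∃ p' : α, ∀ p : α, p ≠ p' → p ≤ p' ∨ p' ≤ p := by
  obtain ⟨c, hc⟩ := exists_isCentral α hconn hacyc hN
  exact ⟨c, fun p _ => hc p⟩
end

section
/- For any a ≥ 2, Λ(a) = max { Λ(f) + Λ(a−f) + (a−f) : a/2 ≤ f < a }. -/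
/-!
A finite `V`-free poset is empty, splits into two nonempty mutually incomparable parts, or has a
greatest element: if a maximal element `r` is not greatest, `V`-freeness makes everything below `r`
incomparable with the rest. On an incomparable union `ao` adds up and the height is the maximum;
adding a greatest element raises the height by one and turns `ao` into `max ao (height + 1)`.

Writing `R(a)` for the right-hand side and `B(a) = max a R(a)`, induction along this decomposition
gives `|P| + ao P ≤ B(ao P) + height P`, using only `B(a) + c ≤ B(a + c)` and
`B(a) + B(b) + b ≤ B(a + b)` for `1 ≤ b ≤ a`. Both follow from `R ≤ Λ`, which is a construction:
put extremal posets for `Λ(f)` and `Λ(a - f)` side by side and stack a chain of length `a - f`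
on top.
-/

open Finset

section MaxCardSubset

variable {α β : Type*}

noncomputable def maxCardSubset (p : Finset α → Prop) (S : Finset α) : ℕ :=
  sSup {m | ∃ U ⊆ S, p U ∧ U.card = m}

variable {p : Finset α → Prop} {S T U : Finset α}

lemma bddAbove_card_subsets (p : Finset α → Prop) (S : Finset α) :
    BddAbove {m | ∃ U ⊆ S, p U ∧ U.card = m} := by
  refine ⟨S.card, ?_⟩
  rintro _ ⟨U, hU, -, rfl⟩
  exact card_le_card hU

lemma card_le_maxCardSubset (hU : U ⊆ S) (h : p U) : U.card ≤ maxCardSubset p S :=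
  le_csSup (bddAbove_card_subsets p S) ⟨U, hU, h, rfl⟩

lemma maxCardSubset_le {n : ℕ} (h : ∀ U ⊆ S, p U → U.card ≤ n) : maxCardSubset p S ≤ n :=
  csSup_le' <| by rintro _ ⟨U, hU, hp, rfl⟩; exact h U hU hp

lemma exists_card_eq_maxCardSubset (h : p ∅) : ∃ U ⊆ S, p U ∧ U.card = maxCardSubset p S :=
  Nat.sSup_mem (s := {m | ∃ U ⊆ S, p U ∧ U.card = m}) ⟨0, ∅, empty_subset S, h, card_empty⟩
    (bddAbove_card_subsets p S)

lemma maxCardSubset_mono (h : S ⊆ T) : maxCardSubset p S ≤ maxCardSubset p T :=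
  maxCardSubset_le fun _ hU hp => card_le_maxCardSubset (hU.trans h) hp

lemma maxCardSubset_le_card : maxCardSubset p S ≤ S.card :=
  maxCardSubset_le fun _ hU _ => card_le_card hU

lemma maxCardSubset_map {q : Finset β → Prop} (f : α ↪ β) (hpq : ∀ U, q (U.map f) ↔ p U)
    (S : Finset α) : maxCardSubset q (S.map f) = maxCardSubset p S := by
  unfold maxCardSubset
  congr 1
  ext m
  constructor
  · rintro ⟨V, hV, hq, rfl⟩
    obtain ⟨U, hU, rfl⟩ := subset_map_iff.1 hV
    exact ⟨U, hU, (hpq U).1 hq, (card_map f).symm⟩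
  · rintro ⟨U, hU, hp, rfl⟩
    exact ⟨U.map f, map_subset_map.2 hU, (hpq U).2 hp, card_map f⟩

end MaxCardSubset

section FinsetInvariants

variable {α β : Type*} [PartialOrder α] [PartialOrder β] {S U V B : Finset α} {r : α}

noncomputable abbrev aoOn (S : Finset α) : ℕ := maxCardSubset IsChainUnion S

noncomputable abbrev heightOn (S : Finset α) : ℕ :=
  maxCardSubset (fun C => IsChain (· ≤ ·) (C : Set α)) S

lemma isChainUnion_empty : IsChainUnion (∅ : Finset α) := by
  simp [IsChainUnion]

lemma exists_aoOn (S : Finset α) : ∃ U ⊆ S, IsChainUnion U ∧ U.card = aoOn S :=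
  exists_card_eq_maxCardSubset isChainUnion_empty

lemma exists_heightOn (S : Finset α) : ∃ C ⊆ S, IsChain (· ≤ ·) (C : Set α) ∧ C.card = heightOn S :=
  exists_card_eq_maxCardSubset (by simp)

lemma IsChainUnion.mono (h : IsChainUnion V) (hUV : U ⊆ V) : IsChainUnion U :=
  fun x hx y hy z hz => h x (hUV hx) y (hUV hy) z (hUV hz)

lemma IsChain.isChainUnion (h : IsChain (· ≤ ·) (U : Set α)) : IsChainUnion U := by
  intro x hx y _ z hz _ _
  rcases eq_or_ne x z with rfl | hne
  · exact .inl le_rfl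
  · exact h hx hz hne

lemma isChainUnion_map_iff (f : α ↪o β) : IsChainUnion (U.map f.toEmbedding) ↔ IsChainUnion U := by
  simp only [IsChainUnion, forall_mem_map, RelEmbedding.coe_toEmbedding, f.le_iff_le]

lemma isChain_map_iff (f : α ↪o β) :
    IsChain (· ≤ ·) (U.map f.toEmbedding : Set β) ↔ IsChain (· ≤ ·) (U : Set α) := by
  rw [coe_map]
  exact IsChain.image_embedding_iff

lemma aoOn_map (f : α ↪o β) (S : Finset α) : aoOn (S.map f.toEmbedding) = aoOn S :=
  maxCardSubset_map _ (fun _ => isChainUnion_map_iff f) S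

lemma heightOn_map (f : α ↪o β) (S : Finset α) : heightOn (S.map f.toEmbedding) = heightOn S :=
  maxCardSubset_map _ (fun _ => isChain_map_iff f) S

lemma heightOn_le_aoOn (S : Finset α) : heightOn S ≤ aoOn S := by
  obtain ⟨C, hCS, hC, hcard⟩ := exists_heightOn S
  exact hcard ▸ card_le_maxCardSubset hCS hC.isChainUnion

lemma one_le_heightOn (hS : S.Nonempty) : 1 ≤ heightOn S := by
  obtain ⟨x, hx⟩ := hS
  simpa using card_le_maxCardSubset (p := fun C => IsChain (· ≤ ·) (C : Set α))
    (singleton_subset_iff.2 hx) (by simp)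

def MutuallyIncomparable (U V : Finset α) : Prop :=
  ∀ x ∈ U, ∀ y ∈ V, ¬(x ≤ y ∨ y ≤ x)

lemma MutuallyIncomparable.disjoint (h : MutuallyIncomparable U V) : Disjoint U V :=
  disjoint_left.2 fun x hU hV => h x hU x hV (.inl le_rfl)

lemma IsChainUnion.union [DecidableEq α] (hU : IsChainUnion U) (hV : IsChainUnion V)
    (h : MutuallyIncomparable U V) : IsChainUnion (U ∪ V) := by
  have same_side : ∀ a ∈ U ∪ V, ∀ b ∈ U ∪ V, (a ≤ b ∨ b ≤ a) →
      (a ∈ U ∧ b ∈ U) ∨ (a ∈ V ∧ b ∈ V) := by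
    intro a ha b hb hab
    rcases mem_union.1 ha with ha | ha <;> rcases mem_union.1 hb with hb | hb
    · exact .inl ⟨ha, hb⟩
    · exact absurd hab (h a ha b hb)
    · exact absurd hab.symm (h b hb a ha)
    · exact .inr ⟨ha, hb⟩
  intro x hx y hy z hz hxy hyz
  have hdis := h.disjoint
  rcases same_side x hx y hy hxy with ⟨hxU, hyU⟩ | ⟨hxV, hyV⟩ <;>
    rcases same_side y hy z hz hyz with ⟨hyU', hzU⟩ | ⟨hyV', hzV⟩
  · exact hU x hxU y hyU z hzU hxy hyz
  · exact absurd hyV' (disjoint_left.1 hdis hyU)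
  · exact absurd hyV (disjoint_left.1 hdis hyU')
  · exact hV x hxV y hyV z hzV hxy hyz

lemma IsChain.subset_or_subset_of_subset_union [DecidableEq α] {C : Finset α}
    (hC : IsChain (· ≤ ·) (C : Set α)) (hCUV : C ⊆ U ∪ V) (h : MutuallyIncomparable U V) :
    C ⊆ U ∨ C ⊆ V := by
  by_contra! hcon
  obtain ⟨⟨x, hxC, hxU⟩, ⟨y, hyC, hyV⟩⟩ := And.imp not_subset.1 not_subset.1 hcon
  have hxV : x ∈ V := (mem_union.1 (hCUV hxC)).resolve_left hxU
  have hyU : y ∈ U := (mem_union.1 (hCUV hyC)).resolve_right hyV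
  exact h y hyU x hxV (hC hyC hxC (by rintro rfl; exact hxU hyU))

lemma aoOn_union [DecidableEq α] (h : MutuallyIncomparable U V) :
    aoOn (U ∪ V) = aoOn U + aoOn V := by
  refine le_antisymm (maxCardSubset_le fun W hW hWc => ?_) ?_
  · have hsplit : W ⊆ W ∩ U ∪ W ∩ V := fun x hx => by
      rcases mem_union.1 (hW hx) with h | h <;> simp [hx, h]
    calc W.card ≤ (W ∩ U ∪ W ∩ V).card := card_le_card hsplit
      _ ≤ (W ∩ U).card + (W ∩ V).card := card_union_le _ _
      _ ≤ aoOn U + aoOn V := add_le_add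
          (card_le_maxCardSubset inter_subset_right (hWc.mono inter_subset_left))
          (card_le_maxCardSubset inter_subset_right (hWc.mono inter_subset_left))
  · obtain ⟨U', hU', hU'c, hU'card⟩ := exists_aoOn U
    obtain ⟨V', hV', hV'c, hV'card⟩ := exists_aoOn V
    have h' : MutuallyIncomparable U' V' := fun x hx y hy => h x (hU' hx) y (hV' hy)
    rw [← hU'card, ← hV'card, ← card_union_of_disjoint h'.disjoint]
    exact card_le_maxCardSubset (union_subset_union hU' hV') (hU'c.union hV'c h')

lemma heightOn_union [DecidableEq α] (h : MutuallyIncomparable U V) :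
    heightOn (U ∪ V) = max (heightOn U) (heightOn V) := by
  refine le_antisymm (maxCardSubset_le fun C hC hCc => ?_)
    (max_le (maxCardSubset_mono subset_union_left) (maxCardSubset_mono subset_union_right))
  rcases hCc.subset_or_subset_of_subset_union hC h with hCU | hCV
  · exact le_max_of_le_left (card_le_maxCardSubset hCU hCc)
  · exact le_max_of_le_right (card_le_maxCardSubset hCV hCc)

section InsertTop

variable (hr : ∀ x ∈ B, x < r)
include hr

lemma heightOn_insert_of_forall_lt [DecidableEq α] : heightOn (insert r B) = heightOn B + 1 := by
  have hrB : r ∉ B := fun h => lt_irrefl r (hr r h)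
  refine le_antisymm (maxCardSubset_le fun C hC hCc => ?_) ?_
  · have hCB : C.erase r ⊆ B := fun x hx => by
      simpa [ne_of_mem_erase hx] using hC (mem_of_mem_erase hx)
    calc C.card ≤ (C.erase r).card + 1 := Nat.sub_le_iff_le_add.1 pred_card_le_card_erase
      _ ≤ heightOn B + 1 := by
        gcongr
        exact card_le_maxCardSubset hCB (hCc.mono (by simp))
  · obtain ⟨K, hKB, hKc, hKcard⟩ := exists_heightOn B
    have hchain : IsChain (· ≤ ·) (insert r K : Set α) :=
      hKc.insert fun x hx _ => .inr (hr x (hKB hx)).le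
    rw [← hKcard, ← card_insert_of_notMem (fun h => hrB (hKB h))]
    exact card_le_maxCardSubset (insert_subset_insert r hKB) (by simpa using hchain)

lemma aoOn_insert_of_forall_lt [DecidableEq α] :
    aoOn (insert r B) = max (aoOn B) (heightOn B + 1) := by
  refine le_antisymm (maxCardSubset_le fun W hW hWc => ?_)
    (max_le (maxCardSubset_mono (subset_insert r B))
      (heightOn_insert_of_forall_lt hr ▸ heightOn_le_aoOn _))
  by_cases hrW : r ∈ W
  · have hle : ∀ x ∈ W, x ≤ r := fun x hx => by
      rcases mem_insert.1 (hW hx) with rfl | hxB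
      · exact le_rfl
      · exact (hr x hxB).le
    -- every element of `W` is comparable with `r`, so `W` is a single chain
    have hWc' : IsChain (· ≤ ·) (W : Set α) := fun x hx y hy _ =>
      hWc x hx r hrW y hy (.inl (hle x hx)) (.inr (hle y hy))
    exact le_max_of_le_right
      (heightOn_insert_of_forall_lt hr ▸ card_le_maxCardSubset hW hWc')
  · exact le_max_of_le_left
      (card_le_maxCardSubset ((subset_insert_iff_of_notMem hrW).1 hW) hWc)

end InsertTop

end FinsetInvariants

section VFreeOn

variable {α : Type*} [PartialOrder α] {S T : Finset α}

def VFreeOn (S : Finset α) : Prop :=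
  ∀ x ∈ S, ∀ y ∈ S, ∀ z ∈ S, x < y → x < z → (y ≤ z ∨ z ≤ y)

lemma VFree.vFreeOn (h : VFree α) (S : Finset α) : VFreeOn S := fun x _ y _ z _ hxy hxz => by
  by_contra hyz
  exact h ⟨x, y, z, hxy, hxz, hyz⟩

lemma VFreeOn.mono (h : VFreeOn T) (hST : S ⊆ T) : VFreeOn S :=
  fun x hx y hy z hz => h x (hST hx) y (hST hy) z (hST hz)

lemma VFreeOn.incomparable_of_le_maximal {r x y : α} (hS : VFreeOn S) (hr : Maximal (· ∈ S) r)
    (hxS : x ∈ S) (hxr : x ≤ r) (hyS : y ∈ S) (hyr : ¬y ≤ r) : ¬(x ≤ y ∨ y ≤ x) := by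
  rintro (hxy | hyx)
  · have hlt : x < y := lt_of_le_of_ne hxy (by rintro rfl; exact hyr hxr)
    rcases hxr.lt_or_eq with hxr | rfl
    · rcases hS x hxS y hyS r hr.1 hlt hxr with hy | hr'
      · exact hyr hy
      · exact hyr (hr.2 hyS hr')
    · exact hyr (hr.2 hyS hlt.le)
  · exact hyr (hyx.trans hxr)

theorem VFreeOn.induction_on [DecidableEq α] {p : Finset α → Prop} (hS : VFreeOn S) (empty : p ∅)
    (union : ∀ U V, U.Nonempty → V.Nonempty → MutuallyIncomparable U V → p U → p V → p (U ∪ V))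
    (insert_top : ∀ r B, (∀ x ∈ B, x < r) → p B → p (insert r B)) : p S := by
  induction S using Finset.strongInduction with
  | H S ih =>
  rcases S.eq_empty_or_nonempty with rfl | hne
  · exact empty
  obtain ⟨r, hr⟩ := exists_maximal hne
  by_cases htop : ∀ x ∈ S, x ≤ r
  · rw [← insert_erase hr.1]
    refine insert_top r _ (fun x hx => lt_of_le_of_ne (htop x (mem_of_mem_erase hx))
      (ne_of_mem_erase hx)) (ih _ (erase_ssubset hr.1) (hS.mono (erase_subset _ _)))
  · classical
    obtain ⟨y, hyS, hyr⟩ : ∃ y ∈ S, ¬y ≤ r := by simpa using htop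
    rw [← filter_union_filter_not_eq (· ≤ r) S]
    exact union _ _ ⟨r, mem_filter.2 ⟨hr.1, le_rfl⟩⟩ ⟨y, mem_filter.2 ⟨hyS, hyr⟩⟩
      (fun x hx z hz => hS.incomparable_of_le_maximal hr (mem_filter.1 hx).1 (mem_filter.1 hx).2
        (mem_filter.1 hz).1 (mem_filter.1 hz).2)
      (ih _ (filter_ssubset.2 ⟨y, hyS, hyr⟩) (hS.mono (filter_subset _ _)))
      (ih _ (filter_ssubset.2 ⟨r, hr.1, not_not.2 le_rfl⟩) (hS.mono (filter_subset _ _)))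

lemma VFreeOn.card_le_aoOn_mul_heightOn [DecidableEq α] (hS : VFreeOn S) :
    S.card ≤ aoOn S * heightOn S := by
  refine hS.induction_on (p := fun S => S.card ≤ aoOn S * heightOn S) (by simp) ?_ ?_
  · intro U V _ _ hUV hU hV
    rw [card_union_of_disjoint hUV.disjoint, aoOn_union hUV, heightOn_union hUV, add_mul]
    exact add_le_add (hU.trans (Nat.mul_le_mul_left _ (le_max_left _ _)))
      (hV.trans (Nat.mul_le_mul_left _ (le_max_right _ _)))
  · intro r B hr hB
    have hrB : r ∉ B := fun h => lt_irrefl r (hr r h)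
    rw [card_insert_of_notMem hrB, aoOn_insert_of_forall_lt hr, heightOn_insert_of_forall_lt hr]
    have := heightOn_le_aoOn B
    nlinarith [le_max_left (aoOn B) (heightOn B + 1), le_max_right (aoOn B) (heightOn B + 1)]

end VFreeOn

section TypeLevel

variable {α β : Type*} [PartialOrder α] [PartialOrder β]

lemma vFree_iff : VFree α ↔ ∀ x y z : α, x < y → x < z → y ≤ z ∨ z ≤ y :=
  ⟨fun h x y z hxy hxz => by_contra fun hyz => h ⟨x, y, z, hxy, hxz, hyz⟩,
    fun h ⟨x, y, z, hxy, hxz, hyz⟩ => hyz (h x y z hxy hxz)⟩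

lemma VFree.of_orderIso (e : α ≃o β) (h : VFree β) : VFree α := by
  rw [vFree_iff] at *
  intro x y z hxy hxz
  simpa only [e.le_iff_le] using h (e x) (e y) (e z) (e.lt_iff_lt.2 hxy) (e.lt_iff_lt.2 hxz)

lemma VFree.sum (hα : VFree α) (hβ : VFree β) : VFree (α ⊕ β) := by
  rw [vFree_iff] at *
  rintro (x | x) (y | y) (z | z) hxy hxz <;> simp_all
  exacts [hα x y z hxy hxz, hβ x y z hxy hxz]

lemma VFree.withTop (h : VFree α) : VFree (WithTop α) := by
  rw [vFree_iff] at *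
  intro x y z hxy hxz
  induction y using WithTop.recTopCoe with
  | top => exact .inr le_top
  | coe y =>
  induction z using WithTop.recTopCoe with
  | top => exact .inl le_top
  | coe z =>
  induction x using WithTop.recTopCoe with
  | top => exact absurd hxy not_top_lt
  | coe x => simpa using h x y z (by simpa using hxy) (by simpa using hxz)

variable [Fintype α] [Fintype β]

lemma ao_eq_aoOn_univ : ao α = aoOn (univ : Finset α) := by
  simp only [ao, aoOn, maxCardSubset, subset_univ, true_and]

lemma heightP_eq_heightOn_univ : heightP α = heightOn (univ : Finset α) := by
  simp only [heightP, heightOn, maxCardSubset, subset_univ, true_and]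

lemma ao_congr (e : α ≃o β) : ao α = ao β := by
  rw [ao_eq_aoOn_univ, ao_eq_aoOn_univ, ← aoOn_map e.toOrderEmbedding]
  exact congrArg aoOn (map_univ_equiv e.toEquiv)

lemma heightP_congr (e : α ≃o β) : heightP α = heightP β := by
  rw [heightP_eq_heightOn_univ, heightP_eq_heightOn_univ, ← heightOn_map e.toOrderEmbedding]
  exact congrArg heightOn (map_univ_equiv e.toEquiv)

def Sum.inlOrderEmbedding : α ↪o α ⊕ β :=
  OrderEmbedding.ofMapLEIff Sum.inl fun _ _ => Sum.inl_le_inl_iff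

def Sum.inrOrderEmbedding : β ↪o α ⊕ β :=
  OrderEmbedding.ofMapLEIff Sum.inr fun _ _ => Sum.inr_le_inr_iff

lemma univ_sum_eq_union [DecidableEq (α ⊕ β)] : (univ : Finset (α ⊕ β)) =
    univ.map (Sum.inlOrderEmbedding (β := β)).toEmbedding ∪
      univ.map (Sum.inrOrderEmbedding (α := α)).toEmbedding := by
  ext (x | x) <;> simp [Sum.inlOrderEmbedding, Sum.inrOrderEmbedding]

lemma mutuallyIncomparable_map_inl_inr :
    MutuallyIncomparable (univ.map (Sum.inlOrderEmbedding (β := β)).toEmbedding)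
      (univ.map (Sum.inrOrderEmbedding (α := α)).toEmbedding) := by
  simp [MutuallyIncomparable, Sum.inlOrderEmbedding, Sum.inrOrderEmbedding]

lemma ao_sum : ao (α ⊕ β) = ao α + ao β := by
  classical
  rw [ao_eq_aoOn_univ, univ_sum_eq_union, aoOn_union mutuallyIncomparable_map_inl_inr, aoOn_map,
    aoOn_map, ← ao_eq_aoOn_univ, ← ao_eq_aoOn_univ]

lemma heightP_sum : heightP (α ⊕ β) = max (heightP α) (heightP β) := by
  classical
  rw [heightP_eq_heightOn_univ, univ_sum_eq_union, heightOn_union mutuallyIncomparable_map_inl_inr,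
    heightOn_map, heightOn_map, ← heightP_eq_heightOn_univ, ← heightP_eq_heightOn_univ]

lemma univ_withTop_eq_insert [DecidableEq (WithTop α)] : (univ : Finset (WithTop α)) =
    insert ⊤ (univ.map (WithTop.coeOrderHom (α := α)).toEmbedding) := by
  ext x
  induction x using WithTop.recTopCoe <;> simp

lemma forall_mem_map_coe_lt_top :
    ∀ x ∈ univ.map (WithTop.coeOrderHom (α := α)).toEmbedding, x < ⊤ := by
  simp

lemma ao_withTop : ao (WithTop α) = max (ao α) (heightP α + 1) := by
  classical
  rw [ao_eq_aoOn_univ, univ_withTop_eq_insert, aoOn_insert_of_forall_lt forall_mem_map_coe_lt_top,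
    aoOn_map, heightOn_map, ← ao_eq_aoOn_univ, ← heightP_eq_heightOn_univ]

lemma heightP_withTop : heightP (WithTop α) = heightP α + 1 := by
  classical
  rw [heightP_eq_heightOn_univ, univ_withTop_eq_insert,
    heightOn_insert_of_forall_lt forall_mem_map_coe_lt_top, heightOn_map,
    ← heightP_eq_heightOn_univ]

end TypeLevel

section Realizable

variable {n m a b h k : ℕ}

/-- Unlike in `Lam`, the height is exact: stacking a chain on top (`addChain`) needs it. -/
def IsRealizable (n a h : ℕ) : Prop :=
  ∃ P : PartialOrder (Fin n), @VFree (Fin n) P ∧ @ao (Fin n) (Fin.fintype n) P = a ∧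
    @heightP (Fin n) (Fin.fintype n) P = h

lemma VFree.isRealizable {β : Type*} [Fintype β] [PartialOrder β] (hV : VFree β)
    (hn : Fintype.card β = n) (ha : ao β = a) (hh : heightP β = h) : IsRealizable n a h := by
  subst hn ha hh
  let e : Fin (Fintype.card β) ≃ β := (Fintype.equivFin β).symm
  let P : PartialOrder (Fin (Fintype.card β)) := e.partialOrder
  -- spelled out, since `Fin _ ≃o β` would pick the standard order of `Fin _`
  let φ : @OrderIso _ β P.toLE _ := ⟨e, Iff.rfl⟩
  exact ⟨P, hV.of_orderIso φ, ao_congr φ, heightP_congr φ⟩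

lemma isRealizable_zero : IsRealizable 0 0 0 := by
  refine ⟨inferInstance, vFree_iff.2 fun x => x.elim0, ?_, ?_⟩
  · rw [ao_eq_aoOn_univ]
    simpa using maxCardSubset_le_card (p := IsChainUnion) (S := (univ : Finset (Fin 0)))
  · rw [heightP_eq_heightOn_univ]
    simpa using maxCardSubset_le_card (S := (univ : Finset (Fin 0)))

lemma IsRealizable.sum (h₁ : IsRealizable n a h) (h₂ : IsRealizable m b k) :
    IsRealizable (n + m) (a + b) (max h k) := by
  obtain ⟨P, hP, rfl, rfl⟩ := h₁
  obtain ⟨Q, hQ, rfl, rfl⟩ := h₂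
  let := P
  let := Q
  exact (hP.sum hQ).isRealizable (by simp) ao_sum heightP_sum

lemma IsRealizable.withTop (h₁ : IsRealizable n a h) :
    IsRealizable (n + 1) (max a (h + 1)) (h + 1) := by
  obtain ⟨P, hP, rfl, rfl⟩ := h₁
  let := P
  exact hP.withTop.isRealizable (Fintype.card_option.trans (by simp)) ao_withTop heightP_withTop

lemma IsRealizable.height_le_ao (h₁ : IsRealizable n a h) : h ≤ a := by
  obtain ⟨P, -, rfl, rfl⟩ := h₁
  rw [ao_eq_aoOn_univ, heightP_eq_heightOn_univ]
  exact heightOn_le_aoOn _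

lemma IsRealizable.addChain (h₁ : IsRealizable n a h) (c : ℕ) :
    IsRealizable (n + c) (max a (h + c)) (h + c) := by
  induction c with
  | zero => simpa [max_eq_left h₁.height_le_ao] using h₁
  | succ c ih =>
    have := ih.withTop
    rw [show max (max a (h + c)) (h + c + 1) = max a (h + c + 1) by omega] at this
    simpa only [← add_assoc] using this

lemma isRealizable_chain (b : ℕ) : IsRealizable b b b := by
  simpa using isRealizable_zero.addChain b

lemma IsRealizable.le_mul (hn : IsRealizable n a h) : n ≤ a * h := by
  obtain ⟨P, hP, rfl, rfl⟩ := hn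
  let := P
  simpa [← ao_eq_aoOn_univ, ← heightP_eq_heightOn_univ] using
    (hP.vFreeOn univ).card_le_aoOn_mul_heightOn

lemma Lam_eq_sSup : Lam a h = sSup {n | ∃ k ≤ h, IsRealizable n a k} := by
  unfold Lam
  congr 1
  ext n
  exact ⟨fun ⟨P, hP, ha, hh⟩ => ⟨_, hh, P, hP, ha, rfl⟩,
    fun ⟨_, hk, P, hP, ha, hh⟩ => ⟨P, hP, ha, hh ▸ hk⟩⟩

lemma bddAbove_isRealizable (a h : ℕ) : BddAbove {n | ∃ k ≤ h, IsRealizable n a k} := by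
  refine ⟨a * h, ?_⟩
  rintro n ⟨k, hk, hn⟩
  exact hn.le_mul.trans (Nat.mul_le_mul_left a hk)

lemma IsRealizable.le_Lam (hn : IsRealizable n a k) (hk : k ≤ h) : n ≤ Lam a h :=
  Lam_eq_sSup ▸ le_csSup (bddAbove_isRealizable a h) ⟨k, hk, hn⟩

lemma Lam_le {c : ℕ} (H : ∀ n k, IsRealizable n a k → k ≤ h → n ≤ c) : Lam a h ≤ c := by
  rw [Lam_eq_sSup]
  exact csSup_le' fun n ⟨k, hk, hn⟩ => H n k hn hk

lemma IsRealizable.exists_isRealizable_Lam (hn : IsRealizable n a k) (hk : k ≤ h) :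
    ∃ k ≤ h, IsRealizable (Lam a h) a k := by
  rw [Lam_eq_sSup]
  exact Nat.sSup_mem (s := {n | ∃ k ≤ h, IsRealizable n a k}) ⟨n, k, hk, hn⟩
    (bddAbove_isRealizable a h)

end Realizable

section Lambda

variable {f g : ℕ}

lemma le_Lambda (b : ℕ) : b ≤ Lambda b :=
  (isRealizable_chain b).le_Lam le_rfl

lemma exists_isRealizable_Lambda (b : ℕ) : ∃ k ≤ b, IsRealizable (Lambda b) b k :=
  (isRealizable_chain b).exists_isRealizable_Lam le_rfl

/-- Two extremal posets side by side, with a chain of length `g` on top of both. -/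
lemma Lambda_add_add_le (hgf : g ≤ f) : Lambda f + Lambda g + g ≤ Lambda (f + g) := by
  obtain ⟨k, hk, hf⟩ := exists_isRealizable_Lambda f
  obtain ⟨l, hl, hg⟩ := exists_isRealizable_Lambda g
  have hP := (hf.sum hg).addChain g
  rw [max_eq_left (by omega)] at hP
  exact hP.le_Lam (by omega)

end Lambda

section Recursion

def lambdaRecSet (a : ℕ) : Set ℕ :=
  {m | ∃ f : ℕ, a ≤ 2 * f ∧ f < a ∧ m = Lambda f + Lambda (a - f) + (a - f)}

/-- For `a ≤ 1` the set `lambdaRecSet a` is empty and its `sSup` is the junk value `0`. -/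
noncomputable def lambdaBound (a : ℕ) : ℕ := max a (sSup (lambdaRecSet a))

variable {a b f g : ℕ}

lemma lambdaRecSet_finite (a : ℕ) : (lambdaRecSet a).Finite :=
  ((Set.finite_Iio a).image fun f => Lambda f + Lambda (a - f) + (a - f)).subset
    (by rintro _ ⟨f, -, hf, rfl⟩; exact ⟨f, hf, rfl⟩)

lemma le_sSup_lambdaRecSet (hg : 1 ≤ g) (hgf : g ≤ f) :
    Lambda f + Lambda g + g ≤ sSup (lambdaRecSet (f + g)) :=
  le_csSup (lambdaRecSet_finite _).bddAbove ⟨f, by omega, by omega, by rw [add_tsub_cancel_left]⟩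

lemma le_sSup_lambdaRecSet_self (ha : 2 ≤ a) : a ≤ sSup (lambdaRecSet a) := by
  have h := le_sSup_lambdaRecSet (f := a - 1) le_rfl (by omega)
  rw [Nat.sub_add_cancel (by omega)] at h
  have := le_Lambda (a - 1)
  have := le_Lambda 1
  omega

lemma sSup_lambdaRecSet_le (a : ℕ) : sSup (lambdaRecSet a) ≤ Lambda a := by
  refine csSup_le' ?_
  rintro _ ⟨f, h2f, hfa, rfl⟩
  have h := Lambda_add_add_le (f := f) (g := a - f) (by omega)
  rwa [Nat.add_sub_cancel' hfa.le] at h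

lemma lambdaBound_le_Lambda (a : ℕ) : lambdaBound a ≤ Lambda a :=
  max_le (le_Lambda a) (sSup_lambdaRecSet_le a)

lemma lambdaBound_add_one_le (a : ℕ) : lambdaBound a + 1 ≤ lambdaBound (a + 1) := by
  rcases (lambdaRecSet a).eq_empty_or_nonempty with hempty | hne
  · simp [lambdaBound, hempty]
  obtain ⟨f, h2f, hfa, hf⟩ := Nat.sSup_mem hne (lambdaRecSet_finite a).bddAbove
  have hstep : Lambda f + 1 ≤ Lambda (f + 1) := by
    have := Lambda_add_add_le (f := f) (g := 1) (by omega)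
    omega
  have hnext : Lambda (f + 1) + Lambda (a - f) + (a - f) ≤ sSup (lambdaRecSet (a + 1)) :=
    le_csSup (lambdaRecSet_finite _).bddAbove
      ⟨f + 1, by omega, by omega, by rw [show a + 1 - (f + 1) = a - f by omega]⟩
  unfold lambdaBound
  omega

lemma lambdaBound_add_le (a c : ℕ) : lambdaBound a + c ≤ lambdaBound (a + c) := by
  induction c with
  | zero => rfl
  | succ c ih =>
    have := lambdaBound_add_one_le (a + c)
    show lambdaBound a + (c + 1) ≤ lambdaBound (a + c + 1)
    omega

lemma lambdaBound_add_add_le (hb : 1 ≤ b) (hba : b ≤ a) :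
    lambdaBound a + lambdaBound b + b ≤ lambdaBound (a + b) :=
  calc lambdaBound a + lambdaBound b + b ≤ Lambda a + Lambda b + b := by
        gcongr <;> exact lambdaBound_le_Lambda _
    _ ≤ sSup (lambdaRecSet (a + b)) := le_sSup_lambdaRecSet hb hba
    _ ≤ lambdaBound (a + b) := le_max_right _ _

end Recursion

section UpperBound

variable {α : Type*} [PartialOrder α] [DecidableEq α]

/-- The induction hypothesis is strengthened by the defect `ao − height`, which the chain-on-top
case consumes. -/
theorem VFreeOn.card_add_aoOn_le {S : Finset α} (hS : VFreeOn S) :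
    S.card + aoOn S ≤ lambdaBound (aoOn S) + heightOn S := by
  refine hS.induction_on
    (p := fun S => S.card + aoOn S ≤ lambdaBound (aoOn S) + heightOn S) ?_ ?_ ?_
  · rw [card_empty, zero_add]
    exact le_add_right (le_max_left _ _)
  · intro U V hU hV hUV ihU ihV
    rw [card_union_of_disjoint hUV.disjoint, aoOn_union hUV, heightOn_union hUV]
    have hU1 : 1 ≤ aoOn U := (one_le_heightOn hU).trans (heightOn_le_aoOn U)
    have hV1 : 1 ≤ aoOn V := (one_le_heightOn hV).trans (heightOn_le_aoOn V)
    have := heightOn_le_aoOn U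
    have := heightOn_le_aoOn V
    rcases le_total (aoOn V) (aoOn U) with h | h
    · have := lambdaBound_add_add_le hV1 h
      omega
    · have := lambdaBound_add_add_le hU1 h
      rw [add_comm (aoOn V)] at this
      omega
  · intro r B hr ih
    rw [card_insert_of_notMem fun h => lt_irrefl r (hr r h), aoOn_insert_of_forall_lt hr,
      heightOn_insert_of_forall_lt hr]
    have := lambdaBound_add_le (aoOn B) (max (aoOn B) (heightOn B + 1) - aoOn B)
    rw [Nat.add_sub_cancel' (le_max_left _ _)] at this
    omega

lemma IsRealizable.add_le_lambdaBound {n a h : ℕ} (hn : IsRealizable n a h) :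
    n + a ≤ lambdaBound a + h := by
  obtain ⟨P, hP, rfl, rfl⟩ := hn
  let := P
  simpa [← ao_eq_aoOn_univ, ← heightP_eq_heightOn_univ] using (hP.vFreeOn univ).card_add_aoOn_le

lemma Lambda_le_lambdaBound (a : ℕ) : Lambda a ≤ lambdaBound a :=
  Lam_le fun _ _ hn hk => by
    have := hn.add_le_lambdaBound
    omega

end UpperBound

/-- for `a ≥ 2`,
`Λ(a) = max { Λ(f) + Λ(a−f) + (a−f) : a/2 ≤ f < a }`. -/
theorem Lambda_recursion (a : ℕ) (ha : 2 ≤ a) :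
    Lambda a = sSup {m | ∃ f : ℕ, a ≤ 2 * f ∧ f < a ∧
      m = Lambda f + Lambda (a - f) + (a - f)} := by
  refine le_antisymm ?_ (sSup_lambdaRecSet_le a)
  calc Lambda a ≤ lambdaBound a := Lambda_le_lambdaBound a
    _ = sSup (lambdaRecSet a) := max_eq_right (le_sSup_lambdaRecSet_self ha)
end
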